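/- arXiv:2210.04488 — 2 statements merged into one kernel-verified Lean document; each statement's English description precedes it below -/
import Mathlib

section
/- Let ℓ > 0 and let c, s be real with c² + s² = 1. If ϑ ≥ 0 then the nuclear norm of the pivot matrix satisfies ‖M(ℓ,ϑ,c,s)‖_N = √((ℓ − ϑ)² + 4ϑℓs²), while if ϑ ≤ 0 then ‖M(ℓ,ϑ,c,s)‖_N = ℓ − ϑ. -/
open Matrix

lemma psd2 (a b c : ℝ) (ha : 0 ≤ a) (hc : 0 ≤ c) (hd : b ^ 2 ≤ a * c) :
    Matrix.PosSemidef !![a, b; b, c] := by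
  rw [Matrix.posSemidef_iff_dotProduct_mulVec]
  constructor
  · ext i j
    fin_cases i <;> fin_cases j <;> simp [Matrix.conjTranspose_apply]
  · intro x
    have hx : star x ⬝ᵥ (!![a, b; b, c] *ᵥ x) =
        a * x 0 ^ 2 + 2 * b * (x 0 * x 1) + c * x 1 ^ 2 := by
      simp [dotProduct, Matrix.mulVec, Fin.sum_univ_two]
      ring
    rw [hx]
    rcases ha.eq_or_lt with h0 | h0
    · have hb : b = 0 := by nlinarith [sq_nonneg b]
      rw [← h0, hb]
      nlinarith [sq_nonneg (x 1)]
    · nlinarith [sq_nonneg (a * x 0 + b * x 1), mul_nonneg (sub_nonneg.2 hd) (sq_nonneg (x 1))]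



/-- The 2×2 pivot matrix M(ℓ,ϑ,c,s) = A − B with A = diag(ℓ,0), B = ϑ·[[c²,cs],[cs,s²]]. -/
noncomputable def pivotM (l θ c s : ℝ) : Matrix (Fin 2) (Fin 2) ℝ :=
  !![l - θ * c ^ 2, -(θ * c * s); -(θ * c * s), -(θ * s ^ 2)]

/-- Frobenius norm: square root of the sum of squares of the entries. -/
noncomputable def frobNorm (A : Matrix (Fin 2) (Fin 2) ℝ) : ℝ :=
  Real.sqrt (∑ i, ∑ j, (A i j) ^ 2)

/-- Operator norm: the ℓ²→ℓ² operator norm, i.e. the largest singular value. -/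
noncomputable def opNorm (A : Matrix (Fin 2) (Fin 2) ℝ) : ℝ :=
  ‖LinearMap.toContinuousLinearMap (Matrix.toEuclideanLin A)‖

/-- Nuclear norm: the trace of √(AᴴA), i.e. the sum of the singular values. -/
noncomputable def nucNorm (A : Matrix (Fin 2) (Fin 2) ℝ) : ℝ :=
  ((Matrix.posSemidef_conjTranspose_mul_self A).1.eigenvectorUnitary.1 *
    Matrix.diagonal ((RCLike.ofReal : ℝ → ℝ) ∘ (Real.sqrt ·) ∘ (Matrix.posSemidef_conjTranspose_mul_self A).1.eigenvalues) *
    (star (Matrix.posSemidef_conjTranspose_mul_self A).1.eigenvectorUnitary : Matrix (Fin 2) (Fin 2) ℝ)).trace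

lemma nucNorm_eq (A S : Matrix (Fin 2) (Fin 2) ℝ) (hS : S.PosSemidef)
    (hsq : S ^ 2 = Aᴴ * A) : nucNorm A = S.trace := by
  have hA := (Matrix.posSemidef_conjTranspose_mul_self A).1
  have e1 : nucNorm A = (cfc Real.sqrt (Aᴴ * A)).trace := by
    rw [hA.cfc_eq, Matrix.IsHermitian.cfc, Unitary.conjStarAlgAut_apply]; rfl
  open scoped MatrixOrder in
  have e2 : cfc Real.sqrt (S ^ 2) = S := by
    have hS0 : 0 ≤ S := hS.nonneg
    rw [← cfcₙ_eq_cfc, ← CFC.sqrt_eq_real_sqrt (S ^ 2)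
      (by rw [hsq]; exact (Matrix.posSemidef_conjTranspose_mul_self A).nonneg), CFC.sqrt_sq S]
  rw [e1, ← hsq, e2]

lemma pivot_herm (l θ c s : ℝ) : (pivotM l θ c s)ᴴ = pivotM l θ c s := by
  ext i j
  fin_cases i <;> fin_cases j <;> simp [pivotM, Matrix.conjTranspose_apply]

set_option maxHeartbeats 1000000 in
theorem nucNorm_pivot (l c s : ℝ) (hl : 0 < l) (h : c ^ 2 + s ^ 2 = 1) :
    (∀ θ : ℝ, 0 ≤ θ →
      nucNorm (pivotM l θ c s) = Real.sqrt ((l - θ) ^ 2 + 4 * θ * l * s ^ 2)) ∧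
    (∀ θ : ℝ, θ ≤ 0 → nucNorm (pivotM l θ c s) = l - θ) := by
  constructor
  · intro θ hθ
    set M := pivotM l θ c s with hM
    set t : ℝ := l - θ with ht
    set d : ℝ := θ * l * s ^ 2 with hd
    have hd0 : 0 ≤ d := by
      have : 0 ≤ θ * l := mul_nonneg hθ hl.le
      positivity
    set K : ℝ := t ^ 2 + 4 * d with hK
    have hK0 : 0 ≤ K := by positivity
    have hCH : M * M = t • M + d • (1 : Matrix (Fin 2) (Fin 2) ℝ) := by
      ext i j
      fin_cases i <;> fin_cases j <;>
        simp [hM, pivotM, Matrix.mul_apply, Fin.sum_univ_two, Matrix.one_apply, ht, hd]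
      · linear_combination (θ ^ 2 * c ^ 2 - l * θ) * h
      · linear_combination (θ ^ 2 * c * s) * h
      · linear_combination (θ ^ 2 * c * s) * h
      · linear_combination (θ ^ 2 * s ^ 2) * h
    rcases hK0.eq_or_lt with hK0' | hKpos
    · -- degenerate case: K = 0, M = 0
      have h1 : t = 0 := by nlinarith [sq_nonneg t]
      have h2 : d = 0 := by nlinarith [sq_nonneg t]
      have hθl : θ = l := by linarith
      have hs : s = 0 := by
        have hθl0 : θ * l ≠ 0 := by rw [hθl]; positivity
        rw [hd] at h2
        have hs2 : s ^ 2 = 0 := by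
          rcases mul_eq_zero.mp h2 with h' | h'
          · exact absurd h' hθl0
          · exact h'
        exact pow_eq_zero_iff two_ne_zero |>.mp hs2
      have hc : c ^ 2 = 1 := by rw [hs] at h; simpa using h
      have hM0 : M = 0 := by
        ext i j
        fin_cases i <;> fin_cases j <;> simp [hM, pivotM, hs, hθl, hc]
      rw [nucNorm_eq M 0 Matrix.PosSemidef.zero (by rw [hM0]; simp)]
      have hz : t ^ 2 + 4 * θ * l * s ^ 2 = 0 := by rw [h1, hs]; ring
      rw [hz, Real.sqrt_zero, Matrix.trace_zero]
    · set D : ℝ := Real.sqrt K with hD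
      have hDpos : 0 < D := Real.sqrt_pos.2 hKpos
      have hD2 : D ^ 2 = K := Real.sq_sqrt hK0
      set a : ℝ := t / D with ha
      set b : ℝ := 2 * d / D with hb
      set S : Matrix (Fin 2) (Fin 2) ℝ :=
        !![a * (l - θ * c ^ 2) + b, a * (-(θ * c * s));
           a * (-(θ * c * s)), a * (-(θ * s ^ 2)) + b] with hS
      have hSM : S = a • M + b • (1 : Matrix (Fin 2) (Fin 2) ℝ) := by
        ext i j
        fin_cases i <;> fin_cases j <;>
          simp [hS, hM, pivotM, Matrix.one_apply]
      -- entries as single fractions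
      set p : ℝ := t * (l - θ * c ^ 2) + 2 * d with hp
      set q : ℝ := t * (-(θ * s ^ 2)) + 2 * d with hq
      set r : ℝ := t * (-(θ * c * s)) with hr
      have hAe : a * (l - θ * c ^ 2) + b = p / D := by rw [ha, hb, hp]; ring
      have hCe : a * (-(θ * s ^ 2)) + b = q / D := by rw [ha, hb, hq]; ring
      have hBe : a * (-(θ * c * s)) = r / D := by rw [ha, hr]; ring
      have hp0 : 0 ≤ p := by
        have hpT : p = (l - θ) ^ 2 * c ^ 2 + l * (l + θ) * s ^ 2 := by
          rw [hp, ht, hd]; linear_combination (l * θ - l ^ 2) * h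
        rw [hpT]
        have : 0 ≤ l * (l + θ) := mul_nonneg hl.le (by linarith)
        positivity
      have hq0 : 0 ≤ q := by
        have hqT : q = θ * (l + θ) * s ^ 2 := by rw [hq, ht, hd]; ring
        rw [hqT]
        have : 0 ≤ θ * (l + θ) := mul_nonneg hθ (by linarith)
        positivity
      have hpqr : p * q - r ^ 2 = d * K := by
        rw [hp, hq, hr, hd, hK, ht]
        linear_combination (-2 * l * θ ^ 2 * (l - θ) * s ^ 2) * h
      have hr2 : r ^ 2 ≤ p * q := by nlinarith [mul_nonneg hd0 hK0]
      have hSpsd : S.PosSemidef := by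
        rw [hS, hAe, hCe, hBe]
        refine psd2 _ _ _ (div_nonneg hp0 hDpos.le) (div_nonneg hq0 hDpos.le) ?_
        rw [div_pow, div_mul_div_comm, show D * D = D ^ 2 from (sq D).symm]
        exact div_le_div_of_nonneg_right hr2 (by positivity)
      have c1 : a * a * t + 2 * (a * b) = t := by
        rw [ha, hb]
        field_simp
        linear_combination (θ - l) * hD2
      have c2 : a * a * d + b * b = d := by
        rw [ha, hb]
        field_simp
        linear_combination (-(θ * l * s ^ 2)) * hD2
      clear_value S r q p b a D K d t M
      have hSS : S * S = M * M := by
        rw [hSM]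
        have expand : (a • M + b • (1 : Matrix (Fin 2) (Fin 2) ℝ)) *
            (a • M + b • (1 : Matrix (Fin 2) (Fin 2) ℝ)) =
            (a * a) • (M * M) + (2 * (a * b)) • M + (b * b) • 1 := by
          simp only [add_mul, mul_add, smul_mul_assoc, mul_smul_comm, one_mul, mul_one,
            smul_smul, smul_add]
          module
        rw [expand, hCH, smul_add, smul_smul, smul_smul]
        match_scalars
        · linear_combination c1
        · linear_combination c2
      have hherm : Mᴴ = M := by rw [hM]; exact pivot_herm l θ c s
      have hsq : S ^ 2 = Mᴴ * M := by rw [pow_two, hSS, hherm]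
      rw [nucNorm_eq M S hSpsd hsq]
      have htr : S.trace = p / D + q / D := by
        rw [hS, Matrix.trace_fin_two_of, hAe, hCe]
      have hfin : p / D + q / D = D := by
        rw [hp, hq]
        field_simp
        linear_combination (-1 : ℝ) * hD2 - t * θ * h - t * ht - hK
      rw [htr, hfin, hD]
      congr 1
      rw [hK, hd]
      ring
  · intro θ hθ
    have hpsd : (pivotM l θ c s).PosSemidef := by
      rw [pivotM]
      refine psd2 _ _ _ ?_ ?_ ?_
      · nlinarith [sq_nonneg c]
      · nlinarith [sq_nonneg s]
      · nlinarith [mul_nonneg (mul_nonneg hl.le (neg_nonneg.2 hθ)) (sq_nonneg s),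
          sq_nonneg (c * s)]
    rw [nucNorm_eq _ _ hpsd (by rw [pow_two, pivot_herm])]
    simp [Matrix.trace, pivotM, Fin.sum_univ_two, Matrix.diag]
    linear_combination (-θ) * h
end

section
/- Define the optimal Frobenius shrinker η̌*(ℓ̌) = ℓ̌ − 1/ℓ̌ for ℓ̌ > 1 and η̌*(ℓ̌) = 0 for 0 < ℓ̌ ≤ 1. Then for every ℓ̌ > 0, Ľ_F(ℓ̌, λ̌(ℓ̌))² − Ľ_F(ℓ̌, η̌*(ℓ̌))² = (λ̌(ℓ̌) − η̌*(ℓ̌))²; this difference equals 4/ℓ̌² when ℓ̌ > 1 and equals 4 when 0 < ℓ̌ ≤ 1, and in particular it is strictly positive for every ℓ̌ > 0. -/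
/-- Limiting cosine č(ℓ̌) in the γ → 0 disproportional framework. -/
noncomputable def cCheck (l : ℝ) : ℝ := if 1 < l then Real.sqrt (1 - 1 / l ^ 2) else 0

/-- Limiting sine š(ℓ̌) = √(1 − č(ℓ̌)²). -/
noncomputable def sCheck (l : ℝ) : ℝ := Real.sqrt (1 - cCheck l ^ 2)

/-- Eigenvalue mapping λ̌(ℓ̌) in the γ → 0 disproportional framework. -/
noncomputable def lamCheck (l : ℝ) : ℝ := if 1 < l then l + 1 / l else 2

/-- Asymptotic Frobenius loss Ľ_F(ℓ̌, ϑ). -/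
noncomputable def lossCheckF (l θ : ℝ) : ℝ := frobNorm (pivotM l θ (cCheck l) (sCheck l))

/-- Asymptotic operator-norm loss Ľ_O(ℓ̌, ϑ). -/
noncomputable def lossCheckO (l θ : ℝ) : ℝ := opNorm (pivotM l θ (cCheck l) (sCheck l))

/-- Asymptotic nuclear-norm loss Ľ_N(ℓ̌, ϑ). -/
noncomputable def lossCheckN (l θ : ℝ) : ℝ := nucNorm (pivotM l θ (cCheck l) (sCheck l))

/-- Optimal Frobenius shrinker η̌* in the γ → 0 framework. -/
noncomputable def etaCheckF (l : ℝ) : ℝ := if 1 < l then l - 1 / l else 0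

theorem frobenius_regret_identity_check (l : ℝ) (hl : 0 < l) :
    lossCheckF l (lamCheck l) ^ 2 - lossCheckF l (etaCheckF l) ^ 2
        = (lamCheck l - etaCheckF l) ^ 2 ∧
    (lamCheck l - etaCheckF l) ^ 2 = (if 1 < l then 4 / l ^ 2 else 4) ∧
    0 < lossCheckF l (lamCheck l) ^ 2 - lossCheckF l (etaCheckF l) ^ 2 := by
  have hc2 : cCheck l ^ 2 = if 1 < l then 1 - 1 / l ^ 2 else 0 := by
    unfold cCheck
    split_ifs with h
    · rw [Real.sq_sqrt]
      have h1 : 1 ≤ l := le_of_lt h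
      have : 1 / l ^ 2 ≤ 1 := by
        rw [div_le_one (by positivity)]
        nlinarith
      linarith
    · ring
  have hs2 : sCheck l ^ 2 = 1 - cCheck l ^ 2 := by
    unfold sCheck
    rw [Real.sq_sqrt]
    rw [hc2]; split_ifs with h
    · have : 0 < 1 / l ^ 2 := by positivity
      linarith
    · norm_num
  have key : ∀ θ : ℝ, lossCheckF l θ ^ 2 = l ^ 2 - 2 * l * θ * cCheck l ^ 2 + θ ^ 2 := by
    intro θ
    unfold lossCheckF frobNorm pivotM
    rw [Real.sq_sqrt (by positivity)]
    simp [Fin.sum_univ_two]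
    linear_combination θ ^ 2 * (cCheck l ^ 2 + sCheck l ^ 2 + 1) * hs2
  rw [key, key, hc2]
  unfold lamCheck etaCheckF
  split_ifs with h
  · have hl' : l ≠ 0 := ne_of_gt hl
    have e1 : l ^ 2 - 2 * l * (l + 1 / l) * (1 - 1 / l ^ 2) + (l + 1 / l) ^ 2 -
        (l ^ 2 - 2 * l * (l - 1 / l) * (1 - 1 / l ^ 2) + (l - 1 / l) ^ 2) = 4 / l ^ 2 := by
      field_simp; ring
    have e2 : (l + 1 / l - (l - 1 / l)) ^ 2 = 4 / l ^ 2 := by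
      field_simp; ring
    exact ⟨by rw [e1, e2], by rw [e2], by rw [e1]; positivity⟩
  · refine ⟨by ring, by ring, by norm_num⟩
end
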